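/- Let (E,T,S,e) be a conditionally ergodic conditional expectation preserving system with T strictly positive and S surjective, assume every upward directed subset D of E₊ for which {Tf : f ∈ D} is order bounded in E has a supremum in E, and assume (S,e) is aperiodic. Then for every integer n ≥ 1 and every real ε > 0 there exists a component q of e such that q, Sq, …, S^{n-1}q are pairwise disjoint and T(e − ⋁_{i=0}^{n-1} S^i q) ≤ ε·e. -/

import Mathlib

noncomputable section

open Function Set

variable {E : Type*}

/-- `e` is a weak order unit: `e > 0` and `e ⊓ |x| = 0` implies `x = 0`. -/
def WeakOrderUnit [Lattice E] [AddCommGroup E] (e : E) : Prop :=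
  0 < e ∧ ∀ x : E, e ⊓ (x ⊔ -x) = 0 → x = 0

/-- `p` is a component of `q ∈ E₊`: `0 ≤ p ≤ q` and `(q - p) ⊓ p = 0`. -/
def IsComponent [Lattice E] [AddCommGroup E] (q p : E) : Prop :=
  0 ≤ p ∧ p ≤ q ∧ (q - p) ⊓ p = 0

/-- `partialSup f n = ⋁_{j < n} f j`, with the empty supremum equal to `0`. -/
def partialSup [Lattice E] [Zero E] (f : ℕ → E) : ℕ → E
  | 0 => 0
  | n + 1 => partialSup f n ⊔ f n

/-- The band projection of `e` onto the band generated by `g`: `P_g e = ⨆_{m ∈ ℕ} (e ⊓ m•g)`. -/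
def bandProjApp [ConditionallyCompleteLattice E] [AddCommGroup E] (g e : E) : E :=
  ⨆ m : ℕ, e ⊓ m • g

/-- `qComp Sinv e p k = p ⊓ S⁻ᵏp ⊓ (e - ⋁_{j=1}^{k-1} S⁻ʲp)` (empty supremum is `0`). -/
def qComp [Lattice E] [AddCommGroup E] (Sinv : E → E) (e p : E) (k : ℕ) : E :=
  p ⊓ Sinv^[k] p ⊓ (e - partialSup (fun j => Sinv^[j + 1] p) (k - 1))

/-- `(E,T,S,e)` is a conditional expectation preserving system: `E` is a Dedekind complete
Riesz space (typeclass assumptions), `e` is a weak order unit, `T` is a strictly positive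
conditional expectation operator with `Te = e`, and `S` is an order-continuous Riesz
homomorphism with `Se = e` and `TS = T`. -/
structure IsCEPS [ConditionallyCompleteLattice E] [AddCommGroup E] [Module ℝ E]
    (T S : E →ₗ[ℝ] E) (e : E) : Prop where
  unit : WeakOrderUnit e
  T_pos : ∀ f : E, 0 ≤ f → 0 ≤ T f
  T_strictPos : ∀ f : E, 0 ≤ f → T f = 0 → f = 0
  T_proj : ∀ f : E, T (T f) = T f
  T_ordCont : ∀ D : Set E, D.Nonempty → DirectedOn (· ≥ ·) D → IsGLB D 0 →
    IsGLB ((⇑T) '' D) 0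
  T_range_sublattice : ∀ x ∈ Set.range T, ∀ y ∈ Set.range T, x ⊔ y ∈ Set.range T
  T_range_dedekind : ∀ D : Set E, D ⊆ Set.range T → D.Nonempty →
    (∃ b ∈ Set.range T, ∀ x ∈ D, x ≤ b) →
    ∃ s ∈ Set.range T, (∀ x ∈ D, x ≤ s) ∧ ∀ b ∈ Set.range T, (∀ x ∈ D, x ≤ b) → s ≤ b
  T_weakUnit : ∀ u : E, WeakOrderUnit u → WeakOrderUnit (T u)
  Te : T e = e
  S_hom : ∀ x y : E, S (x ⊔ y) = S x ⊔ S y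
  S_ordCont : ∀ D : Set E, D.Nonempty → DirectedOn (· ≥ ·) D → IsGLB D 0 →
    IsGLB ((⇑S) '' D) 0
  Se : S e = e
  TS : ∀ f : E, T (S f) = T f

/-- `E` is `T`-universally complete: every upward directed subset `D` of `E₊` for which
`T '' D` is order bounded in `E` has a supremum in `E`. -/
def TUnivComplete [ConditionallyCompleteLattice E] [AddCommGroup E] [Module ℝ E]
    (T : E →ₗ[ℝ] E) : Prop :=
  ∀ D : Set E, D.Nonempty → D ⊆ {x : E | 0 ≤ x} → DirectedOn (· ≤ ·) D →
    BddAbove ((⇑T) '' D) → BddBelow ((⇑T) '' D) → ∃ s : E, IsLUB D s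

/-- `(S, v)` is aperiodic (with `Sinv` the inverse of `S`): for every `N ∈ ℕ` and every
nonzero component `c` of `v` there exist `k ≥ N` and a component `u` of `c` with
`q(u,k) ≠ 0`. -/
def IsAperiodic [Lattice E] [AddCommGroup E] (Sinv : E → E) (e v : E) : Prop :=
  ∀ N : ℕ, ∀ c : E, IsComponent v c → c ≠ 0 →
    ∃ k : ℕ, N ≤ k ∧ ∃ u : E, IsComponent c u ∧ qComp Sinv e u k ≠ 0

/-- `(S, e)` is periodic (with `Sinv` the inverse of `S`): there is `N ∈ ℕ` such that
`q(c,k) = 0` for all `k ≥ N` and all components `c` of `e` with `0 ≠ c ≠ e`. -/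
def IsPeriodic [Lattice E] [AddCommGroup E] (Sinv : E → E) (e : E) : Prop :=
  ∃ N : ℕ, ∀ c : E, IsComponent e c → c ≠ 0 → c ≠ e → ∀ k : ℕ, N ≤ k → qComp Sinv e c k = 0


/-!
The components of `e` form a complete Boolean algebra on which `S` acts as an automorphism `φ`,
and `T` restricted to components is a finitely additive, order continuous, `φ`-invariant
`E`-valued measure of total mass `e`. Since `T` is strictly positive and every `T`-value is
at most `e`, the Archimedean property of `E` rules out nonzero wandering components, so `φ` is
conservative (Poincaré recurrence).

Aperiodicity and Zorn's lemma give a marker `B` with `B ⊓ S⁻ʲB = 0` for `0 < j < K` that meets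
every invariant component. Splitting `B` by first return time, the Kac towers over `B` have
heights `k ≥ K` and exhaust `e`. Cutting each tower into blocks of `n` consecutive levels, the
bottoms of the blocks form the base `q`; the levels left over are at most `k % n < n ≤ nk/K` of
a tower of height `k`, so their `T`-measure is at most `(n/K) e ≤ ε e` once `K ≥ n/ε`.
-/

section LatticeOrderedGroup

variable [Lattice E] [AddCommGroup E]

theorem inf_eq_zero_of_le {x y x' y' : E} (hx : 0 ≤ x) (hy : 0 ≤ y) (hxx' : x ≤ x')
    (hyy' : y ≤ y') (h : x' ⊓ y' = 0) : x ⊓ y = 0 :=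
  le_antisymm (h ▸ inf_le_inf hxx' hyy') (le_inf hx hy)

variable [IsOrderedAddMonoid E]

theorem sup_eq_add_of_inf_eq_zero {x y : E} (h : x ⊓ y = 0) : x ⊔ y = x + y := by
  simpa [h] using inf_add_sup x y

theorem inf_eq_sub_sup_zero (a x : E) : a ⊓ x = x - (x - a) ⊔ 0 := by
  rw [← sub_self x, ← sub_inf, sub_sub_cancel, inf_comm]

theorem isLUB_iff_isGLB_sub {A : Set E} {s : E} : IsLUB A s ↔ IsGLB ((s - ·) '' A) 0 := by
  rw [← (OrderIso.subLeft s).isLUB_image']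
  simp only [OrderIso.subLeft_apply, sub_self]
  rfl

theorem IsLUB.inf_left {A : Set E} {s : E} (h : IsLUB A s) (a : E) :
    IsLUB ((a ⊓ ·) '' A) (a ⊓ s) := by
  refine ⟨?_, fun u hu => ?_⟩
  · rintro _ ⟨d, hd, rfl⟩
    exact inf_le_inf_left a (h.1 hd)
  · have hs : s ≤ u + (s - a) ⊔ 0 := h.2 fun d hd => by
      have hd' : d - (d - a) ⊔ 0 ≤ u := inf_eq_sub_sup_zero a d ▸ hu ⟨d, hd, rfl⟩
      calc d ≤ u + (d - a) ⊔ 0 := sub_le_iff_le_add.1 hd'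
        _ ≤ u + (s - a) ⊔ 0 := by gcongr; exact h.1 hd
    rw [inf_eq_sub_sup_zero]
    exact sub_le_iff_le_add.2 hs

end LatticeOrderedGroup

theorem eq_zero_of_forall_nsmul_le [ConditionallyCompleteLattice E] [AddCommGroup E]
    [IsOrderedAddMonoid E] {z b : E} (hz : 0 ≤ z) (h : ∀ m : ℕ, m • z ≤ b) : z = 0 := by
  have hlub := isLUB_csSup (range_nonempty fun m : ℕ => m • z) ⟨b, forall_mem_range.2 h⟩
  have : sSup (range fun m : ℕ => m • z) ≤ sSup (range fun m : ℕ => m • z) - z :=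
    hlub.2 <| forall_mem_range.2 fun m =>
      le_sub_iff_add_le.2 (by simpa [succ_nsmul] using hlub.1 ⟨m + 1, rfl⟩)
  exact le_antisymm ((le_sub_self_iff _).1 this) hz

theorem sum_mod_smul_le_div_smul_sum {M : Type*} [AddCommGroup M] [PartialOrder M]
    [IsOrderedAddMonoid M] [Module ℝ M] [PosSMulMono ℝ M] {x : ℕ → M} {K n : ℕ} (hK : 0 < K)
    (hn : 0 < n) (hx : ∀ k, 0 ≤ x k) (hxK : ∀ k, 0 < k → k < K → x k = 0) (m : ℕ) :
    ∑ k ∈ Finset.range m, (k % n) • x k ≤ ((n : ℝ) / K) • ∑ k ∈ Finset.range m, k • x k := by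
  rw [Finset.smul_sum]
  refine Finset.sum_le_sum fun k _ => ?_
  rcases Nat.eq_zero_or_pos k with rfl | hk
  · simp
  rcases lt_or_ge k K with hkK | hKk
  · simp [hxK k hk hkK]
  rw [← Nat.cast_smul_eq_nsmul ℝ, ← Nat.cast_smul_eq_nsmul ℝ, smul_smul]
  refine smul_le_smul_of_nonneg_right ?_ (hx k)
  calc ((k % n : ℕ) : ℝ) ≤ n := by exact_mod_cast (Nat.mod_lt k hn).le
    _ = n / K * K := by field_simp
    _ ≤ n / K * k := by gcongr

namespace IsComponent

variable [Lattice E] [AddCommGroup E] {e p q : E}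

theorem zero (he : 0 ≤ e) : IsComponent e 0 :=
  ⟨le_rfl, he, by simpa using inf_of_le_right he⟩

theorem self (he : 0 ≤ e) : IsComponent e e :=
  ⟨he, le_rfl, by simpa using inf_of_le_left he⟩

theorem map_iff (f : E ≃+o E) (hf : f e = e) : IsComponent e (f p) ↔ IsComponent e p := by
  conv_lhs => rw [IsComponent, ← hf, ← map_sub, ← map_inf, ← map_zero f]
  simp only [map_le_map_iff, EmbeddingLike.apply_eq_iff_eq, IsComponent]

variable [IsOrderedAddMonoid E]

theorem sub (hp : IsComponent e p) : IsComponent e (e - p) :=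
  ⟨sub_nonneg.2 hp.2.1, sub_le_self e hp.1, by rw [sub_sub_cancel, inf_comm]; exact hp.2.2⟩

theorem sup_sub_eq (hp : IsComponent e p) : p ⊔ (e - p) = e := by
  rw [sup_eq_add_of_inf_eq_zero (by rw [inf_comm]; exact hp.2.2), add_sub_cancel]

theorem sup (hp : IsComponent e p) (hq : IsComponent e q) : IsComponent e (p ⊔ q) := by
  let _ := AddCommGroup.toDistribLattice E
  have hpq : p ⊔ q ≤ e := sup_le hp.2.1 hq.2.1
  refine ⟨le_sup_of_le_left hp.1, hpq,
    le_antisymm ?_ (le_inf (sub_nonneg.2 hpq) (le_sup_of_le_left hp.1))⟩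
  rw [inf_sup_left]
  exact sup_le ((inf_le_inf_right p (sub_le_sub_left le_sup_left e)).trans_eq hp.2.2)
    ((inf_le_inf_right q (sub_le_sub_left le_sup_right e)).trans_eq hq.2.2)

theorem inf (hp : IsComponent e p) (hq : IsComponent e q) : IsComponent e (p ⊓ q) := by
  let _ := AddCommGroup.toDistribLattice E
  have hpq : p ⊓ q ≤ e := inf_le_of_left_le hp.2.1
  refine ⟨le_inf hp.1 hq.1, hpq, le_antisymm ?_ (le_inf (sub_nonneg.2 hpq) (le_inf hp.1 hq.1))⟩
  rw [sub_inf, inf_sup_right]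
  exact sup_le ((inf_le_inf_left _ inf_le_left).trans_eq hp.2.2)
    ((inf_le_inf_left _ inf_le_right).trans_eq hq.2.2)

theorem of_isLUB {A : Set E} {s : E} (hA : ∀ a ∈ A, IsComponent e a) (hne : A.Nonempty)
    (h : IsLUB A s) : IsComponent e s := by
  obtain ⟨a, ha⟩ := hne
  have hs0 : 0 ≤ s := (hA a ha).1.trans (h.1 ha)
  have hse : s ≤ e := h.2 fun a ha => (hA a ha).2.1
  refine ⟨hs0, hse, le_antisymm ((h.inf_left (e - s)).2 ?_) (le_inf (sub_nonneg.2 hse) hs0)⟩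
  rintro _ ⟨d, hd, rfl⟩
  exact (inf_le_inf_right d (sub_le_sub_left (h.1 hd) e)).trans_eq (hA d hd).2.2

theorem trans {c : E} (hc : IsComponent e c) (hp : IsComponent c p) : IsComponent e p := by
  let _ := AddCommGroup.toDistribLattice E
  have hcp : 0 ≤ c - p := sub_nonneg.2 hp.2.1
  have hec : 0 ≤ e - c := sub_nonneg.2 hc.2.1
  have hdisj : (c - p) ⊓ (e - c) = 0 :=
    inf_eq_zero_of_le hcp hec (sub_le_self c hp.1) le_rfl (by rw [inf_comm, hc.2.2])
  have hsplit : e - p = (c - p) ⊔ (e - c) := by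
    rw [sup_eq_add_of_inf_eq_zero hdisj]; abel
  refine ⟨hp.1, hp.2.1.trans hc.2.1, ?_⟩
  rw [hsplit, inf_sup_right, hp.2.2, inf_eq_zero_of_le hec hp.1 le_rfl hp.2.1 hc.2.2, sup_idem]

end IsComponent

abbrev Component [Lattice E] [AddCommGroup E] (e : E) := {p : E // IsComponent e p}

namespace Component

section Congr

variable [Lattice E] [AddCommGroup E] (e : E)

def congr (f : E ≃+o E) (hf : f e = e) : Component e ≃o Component e where
  toFun p := ⟨f p, (IsComponent.map_iff f hf).2 p.2⟩
  invFun p := ⟨f.symm p, (IsComponent.map_iff f hf).1 (by rw [f.apply_symm_apply]; exact p.2)⟩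
  left_inv p := Subtype.ext (f.symm_apply_apply p)
  right_inv p := Subtype.ext (f.apply_symm_apply p)
  map_rel_iff' := f.map_le_map_iff'

variable {e}

theorem coe_congr_pow_apply (f : E ≃+o E) (hf : f e = e) (k : ℕ) (p : Component e) :
    ((congr e f hf ^ k) p : E) = f^[k] p := by
  induction k with
  | zero => rfl
  | succ k ih => rw [pow_succ', RelIso.mul_apply, iterate_succ_apply', ← ih]; rfl

theorem coe_congr_inv_pow_apply (f : E ≃+o E) (hf : f e = e) (k : ℕ) (p : Component e) :
    (((congr e f hf)⁻¹ ^ k) p : E) = f.symm^[k] p := by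
  induction k with
  | zero => rfl
  | succ k ih => rw [pow_succ', RelIso.mul_apply, iterate_succ_apply', ← ih]; rfl

end Congr

variable [ConditionallyCompleteLattice E] [AddCommGroup E] {e : E} [he : Fact (0 ≤ e)]

/- Suprema of components are taken in `E` after adjoining `0`, so that the empty family has
supremum `0` instead of a junk value of `sSup ∅`. -/
theorem isLUB_csSup_insert_zero (s : Set (Component e)) :
    IsLUB (insert 0 (Subtype.val '' s)) (sSup (insert 0 (Subtype.val '' s))) :=
  isLUB_csSup (insert_nonempty _ _) ⟨e, by rintro _ (rfl | ⟨p, -, rfl⟩); exacts [he.out, p.2.2.1]⟩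

variable [IsOrderedAddMonoid E]

theorem isComponent_csSup_insert_zero (s : Set (Component e)) :
    IsComponent e (sSup (insert 0 (Subtype.val '' s))) :=
  .of_isLUB (by rintro _ (rfl | ⟨p, -, rfl⟩); exacts [.zero he.out, p.2]) (insert_nonempty _ _)
    (isLUB_csSup_insert_zero s)

theorem isLUB_mk_csSup_insert_zero (s : Set (Component e)) :
    IsLUB s (⟨_, isComponent_csSup_insert_zero s⟩ : Component e) := by
  refine ⟨fun p hp => (isLUB_csSup_insert_zero s).1 (mem_insert_of_mem _ ⟨p, hp, rfl⟩),
    fun p hp => (isLUB_csSup_insert_zero s).2 ?_⟩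
  rintro _ (rfl | ⟨q, hq, rfl⟩)
  exacts [p.2.1, hp hq]

noncomputable instance : CompleteBooleanAlgebra (Component e) where
  __ := Subtype.lattice (fun _ _ => IsComponent.sup) (fun _ _ => IsComponent.inf)
  le_sup_inf p q r :=
    let _ := AddCommGroup.toDistribLattice E
    le_sup_inf (x := (p : E)) (y := q) (z := r)
  top := ⟨e, .self he.out⟩
  le_top p := p.2.2.1
  bot := ⟨0, .zero he.out⟩
  bot_le p := p.2.1
  compl p := ⟨e - p, p.2.sub⟩
  inf_compl_le_bot p := (le_of_eq (by rw [inf_comm]; exact p.2.2.2) : (p : E) ⊓ (e - p) ≤ 0)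
  top_le_sup_compl p := p.2.sup_sub_eq.ge
  sSup s := ⟨_, isComponent_csSup_insert_zero s⟩
  isLUB_sSup := isLUB_mk_csSup_insert_zero
  sInf s := ⟨_, isComponent_csSup_insert_zero (lowerBounds s)⟩
  isGLB_sInf s := isLUB_lowerBounds.1 (isLUB_mk_csSup_insert_zero (lowerBounds s))

@[simp] theorem coe_bot : ((⊥ : Component e) : E) = 0 := rfl

@[simp] theorem coe_sup (p q : Component e) : ((p ⊔ q : Component e) : E) = (p : E) ⊔ (q : E) :=
  rfl

@[simp] theorem coe_inf (p q : Component e) : ((p ⊓ q : Component e) : E) = (p : E) ⊓ (q : E) :=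
  rfl

@[simp] theorem coe_compl (p : Component e) : ((pᶜ : Component e) : E) = e - (p : E) := rfl

theorem disjoint_iff_coe_inf {p q : Component e} : Disjoint p q ↔ (p : E) ⊓ (q : E) = 0 := by
  rw [disjoint_iff, Subtype.ext_iff, coe_inf, coe_bot]

theorem coe_sup_of_disjoint {p q : Component e} (h : Disjoint p q) :
    ((p ⊔ q : Component e) : E) = (p : E) + (q : E) :=
  sup_eq_add_of_inf_eq_zero (disjoint_iff_coe_inf.1 h)

theorem coe_iSup_lt (f : ℕ → Component e) (m : ℕ) :
    ((⨆ i < m, f i : Component e) : E) = partialSup (fun i => (f i : E)) m := by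
  induction m with
  | zero => simp [partialSup]
  | succ m ih => rw [Nat.iSup_lt_succ, coe_sup, ih, partialSup]

theorem coe_iSup_lt_eq_sum {f : ℕ → Component e} {m : ℕ} (hf : (Iio m).PairwiseDisjoint f) :
    ((⨆ i < m, f i : Component e) : E) = ∑ i ∈ Finset.range m, (f i : E) := by
  induction m with
  | zero => simp
  | succ m ih =>
    rw [Nat.iSup_lt_succ, Finset.sum_range_succ, ← ih (hf.subset (Iio_subset_Iio m.le_succ))]
    refine coe_sup_of_disjoint (disjoint_iSup₂_iff.2 fun i hi => ?_).symm
    exact (hf (mem_Iio.2 (hi.trans m.lt_succ_self)) (mem_Iio.2 m.lt_succ_self) hi.ne).symm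

theorem isLUB_coe_iSup (f : ℕ → Component e) :
    IsLUB (range fun i => (f i : E)) (⨆ i, f i : Component e) := by
  refine ⟨?_, fun u hu => ?_⟩
  · rintro _ ⟨i, rfl⟩
    exact le_iSup f i
  · refine (isLUB_csSup_insert_zero (range f)).2 ?_
    rintro _ (rfl | ⟨_, ⟨i, rfl⟩, rfl⟩)
    exacts [(f 0).2.1.trans (hu ⟨0, rfl⟩), hu ⟨i, rfl⟩]

end Component

namespace OrderIso

variable {α : Type*}

section Pow

variable [LE α] (φ : α ≃o α)

theorem pow_apply_pow_apply (i j : ℕ) (x : α) : (φ ^ i) ((φ ^ j) x) = (φ ^ (i + j)) x := by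
  rw [pow_add, RelIso.mul_apply]

theorem pow_inv_pow_apply (k : ℕ) (x : α) : (φ ^ k) ((φ⁻¹ ^ k) x) = x := by
  rw [inv_pow, RelIso.apply_inv_self]

theorem pow_apply_eq_self {c : α} (hc : φ c = c) (j : ℕ) : (φ ^ j) c = c := by
  induction j with
  | zero => rfl
  | succ j ih => rw [pow_succ', RelIso.mul_apply, ih, hc]

end Pow

theorem pairwise_disjoint_pow_apply [SemilatticeInf α] [OrderBot α] (φ : α ≃o α) {z : α}
    (hz : ∀ j, Disjoint z ((φ ^ (j + 1)) z)) : Pairwise (Disjoint on fun i => (φ ^ i) z) := by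
  refine (pairwise_disjoint_on _).2 fun i j hij => ?_
  obtain ⟨t, rfl⟩ := Nat.exists_eq_add_of_lt hij
  rw [show i + t + 1 = i + (t + 1) by omega, ← pow_apply_pow_apply]
  exact (hz t).map_orderIso (φ ^ i)

variable [CompleteBooleanAlgebra α] (φ : α ≃o α)

def IsConservative : Prop :=
  ∀ z : α, (∀ j, Disjoint z ((φ ^ (j + 1)) z)) → z = ⊥

/-- The part of `b` that returns to `b` under `φ` for the first time after `k` steps; for `φ`
induced by `S` this is the paper's `q(b,k)`. -/
def firstReturn (b : α) (k : ℕ) : α :=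
  b ⊓ (φ⁻¹ ^ k) b ⊓ (⨆ j < k - 1, (φ⁻¹ ^ (j + 1)) b)ᶜ

def IsAperiodic : Prop :=
  ∀ N, ∀ c ≠ ⊥, ∃ k ≥ N, ∃ u ≤ c, φ.firstReturn u k ≠ ⊥

theorem IsConservative.apply_eq_of_apply_le {φ : α ≃o α} (hφ : φ.IsConservative) {v : α}
    (h : φ v ≤ v) : φ v = v := by
  have hpow : ∀ j, (φ ^ j) v ≤ v := fun j => by
    induction j with
    | zero => exact le_rfl
    | succ j ih => rw [pow_succ, RelIso.mul_apply]; exact ((φ ^ j).monotone h).trans ih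
  refine le_antisymm h (sdiff_eq_bot_iff.1 (hφ _ fun j => ?_))
  refine disjoint_sdiff_self_left.mono_right ?_
  rw [pow_succ', RelIso.mul_apply]
  exact φ.monotone (((φ ^ j).monotone sdiff_le).trans (hpow j))

section FirstReturn

variable {b : α} {k : ℕ}

theorem firstReturn_le : φ.firstReturn b k ≤ b :=
  inf_le_left.trans inf_le_left

theorem firstReturn_le_inv_pow : φ.firstReturn b k ≤ (φ⁻¹ ^ k) b :=
  inf_le_left.trans inf_le_right

theorem pow_firstReturn_le : (φ ^ k) (φ.firstReturn b k) ≤ b :=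
  ((φ ^ k).monotone φ.firstReturn_le_inv_pow).trans_eq (pow_inv_pow_apply ..)

theorem disjoint_firstReturn {j : ℕ} (hj : 0 < j) (hjk : j < k) :
    Disjoint (φ.firstReturn b k) ((φ⁻¹ ^ j) b) := by
  refine disjoint_compl_left.mono inf_le_right (le_iSup₂_of_le (j - 1) (by omega) ?_)
  rw [Nat.sub_add_cancel hj]

theorem firstReturn_eq_bot (h : Disjoint b ((φ⁻¹ ^ k) b)) : φ.firstReturn b k = ⊥ :=
  disjoint_self.1 (h.mono φ.firstReturn_le φ.firstReturn_le_inv_pow)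

/-- Kac's lemma. -/
theorem disjoint_pow_firstReturn {m j i : ℕ} (hj : j < k) (hi : i < m) (hne : (k, j) ≠ (m, i)) :
    Disjoint ((φ ^ j) (φ.firstReturn b k)) ((φ ^ i) (φ.firstReturn b m)) := by
  wlog hji : j ≤ i generalizing k m j i
  · exact (this hi hj hne.symm (by omega)).symm
  obtain ⟨t, rfl⟩ := Nat.exists_eq_add_of_le hji
  rw [← pow_apply_pow_apply, disjoint_map_orderIso_iff]
  rcases Nat.eq_zero_or_pos t with rfl | ht
  · have hkm : k ≠ m := by rintro rfl; simp at hne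
    rcases lt_or_gt_of_ne hkm with hkm | hkm
    · exact (φ.disjoint_firstReturn (by omega) hkm).symm.mono_left φ.firstReturn_le_inv_pow
    · exact (φ.disjoint_firstReturn (by omega) hkm).mono_right φ.firstReturn_le_inv_pow
  · have := (φ.disjoint_firstReturn (b := b) (k := m) ht (by omega)).map_orderIso (φ ^ t)
    rw [pow_inv_pow_apply] at this
    exact this.symm.mono_left φ.firstReturn_le

end FirstReturn

variable {φ}

/-- Poincaré recurrence. -/
theorem IsConservative.iSup_firstReturn_succ (hφ : φ.IsConservative) (b : α) :
    ⨆ k, φ.firstReturn b (k + 1) = b := by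
  refine le_antisymm (iSup_le fun _ => φ.firstReturn_le) ?_
  set z := b \ ⨆ k, φ.firstReturn b (k + 1)
  have hz : ∀ j, Disjoint z ((φ⁻¹ ^ (j + 1)) b) := by
    intro j
    induction j using Nat.strong_induction_on with
    | _ j ih =>
      set P := ⨆ i < j, (φ⁻¹ ^ (i + 1)) b
      have hF : Disjoint z (φ.firstReturn b (j + 1)) :=
        disjoint_sdiff_self_left.mono_right (le_iSup (fun k => φ.firstReturn b (k + 1)) j)
      have hP : Disjoint z P := disjoint_iSup₂_iff.2 ih
      rw [disjoint_iff_inf_le]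
      calc z ⊓ (φ⁻¹ ^ (j + 1)) b ≤ z ⊓ (φ.firstReturn b (j + 1) ⊔ P) := by
            refine le_inf inf_le_left ((inf_le_inf_right _ (sdiff_le : z ≤ b)).trans ?_)
            rw [firstReturn, Nat.add_sub_cancel, ← _root_.sdiff_eq]
            exact le_sdiff_sup
        _ ≤ ⊥ := (disjoint_sup_right.2 ⟨hF, hP⟩).le_bot
  refine sdiff_eq_bot_iff.1 (hφ z fun j => ?_)
  have := ((hz j).mono_right ((φ⁻¹ ^ (j + 1)).monotone (sdiff_le : z ≤ b))).map_orderIso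
    (φ ^ (j + 1))
  rw [pow_inv_pow_apply] at this
  exact this.symm

theorem IsConservative.iSup_pow_firstReturn_eq_top (hφ : φ.IsConservative) {b : α}
    (hb : ∀ c, φ c = c → Disjoint c b → c = ⊥) :
    ⨆ k, ⨆ j < k, (φ ^ j) (φ.firstReturn b k) = ⊤ := by
  set v := ⨆ k, ⨆ j < k, (φ ^ j) (φ.firstReturn b k)
  have hbv : b ≤ v := by
    rw [← hφ.iSup_firstReturn_succ b]
    exact iSup_le fun k => le_iSup_of_le (k + 1) (le_iSup₂_of_le 0 k.succ_pos le_rfl)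
  have hv : φ v ≤ v := by
    simp only [v, map_iSup, ← RelIso.mul_apply, ← pow_succ']
    refine iSup₂_le fun k j => iSup_le fun hjk => ?_
    rcases (Nat.succ_le_of_lt hjk).lt_or_eq with hjk | rfl
    · exact le_iSup_of_le k (le_iSup₂_of_le (j + 1) hjk le_rfl)
    · exact φ.pow_firstReturn_le.trans hbv
  have hvc : vᶜ = ⊥ := hb vᶜ (by rw [map_compl', hφ.apply_eq_of_apply_le hv])
    (disjoint_compl_left.mono_right hbv)
  exact compl_eq_bot.1 hvc

/- A maximal `K`-separated `b` exists by Zorn. If an invariant `c ≠ ⊥` missed `b`, aperiodicity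
would give a nonzero piece of `c` with first return time `≥ K`, which could be added to `b`. -/
theorem IsAperiodic.exists_marker (hφ : φ.IsAperiodic) (K : ℕ) :
    ∃ b, (∀ j, 0 < j → j < K → Disjoint b ((φ⁻¹ ^ j) b)) ∧
      ∀ c, φ c = c → Disjoint c b → c = ⊥ := by
  set Sep := {b : α | ∀ j, 0 < j → j < K → Disjoint b ((φ⁻¹ ^ j) b)}
  obtain ⟨b, hb⟩ := zorn_le₀ Sep fun ch hch hchain => by
    refine ⟨sSup ch, fun j hj hjK => ?_, fun _ => le_sSup⟩
    rw [OrderIso.map_sSup, sSup_disjoint_iff]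
    intro a ha
    refine disjoint_iSup₂_iff.2 fun c hc => ?_
    rcases hchain.total ha hc with hac | hca
    · exact (hch hc j hj hjK).mono_left hac
    · exact (hch ha j hj hjK).mono_right ((φ⁻¹ ^ j).monotone hca)
  refine ⟨b, hb.1, fun c hc hcb => ?_⟩
  by_contra hc0
  obtain ⟨k, hkK, u, huc, hu⟩ := hφ K c hc0
  set p := φ.firstReturn u k
  have hpc : p ≤ c := φ.firstReturn_le.trans huc
  have hc_inv : ∀ j, (φ⁻¹ ^ j) c = c :=
    pow_apply_eq_self φ⁻¹ (by rw [← hc, RelIso.inv_apply_self, hc])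
  have hsep : b ⊔ p ∈ Sep := by
    intro j hj hjK
    have hcb' : Disjoint c ((φ⁻¹ ^ j) b) := hc_inv j ▸ hcb.map_orderIso (φ⁻¹ ^ j)
    rw [map_sup, disjoint_sup_left, disjoint_sup_right, disjoint_sup_right]
    refine ⟨⟨hb.1 j hj hjK, hcb.symm.mono_right ?_⟩, hcb'.mono_left hpc,
      (φ.disjoint_firstReturn hj (by omega)).mono_right ((φ⁻¹ ^ j).monotone φ.firstReturn_le)⟩
    exact ((φ⁻¹ ^ j).monotone hpc).trans_eq (hc_inv j)
  exact hu (disjoint_self.1 (hcb.mono hpc (le_sup_right.trans (hb.2 hsep le_sup_left))))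

variable (φ) (b : α) (n : ℕ)

/- The Kac tower of height `k` is cut into `k / n` blocks of `n` levels: `rokhlinBase` is the
union of the bottoms of the blocks and `rokhlinResidual` that of the `k % n` levels above them. -/
def rokhlinBase : α :=
  ⨆ k, ⨆ a < k / n, (φ ^ (a * n)) (φ.firstReturn b k)

def rokhlinResidual : α :=
  ⨆ k, ⨆ j < k % n, (φ ^ (n * (k / n) + j)) (φ.firstReturn b k)

theorem pow_rokhlinBase (i : ℕ) :
    (φ ^ i) (φ.rokhlinBase b n) = ⨆ k, ⨆ a < k / n, (φ ^ (i + a * n)) (φ.firstReturn b k) := by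
  simp only [rokhlinBase, map_iSup, pow_apply_pow_apply]

theorem disjoint_pow_rokhlinBase {i i' : ℕ} (hi : i < n) (hi' : i' < n) (hii' : i ≠ i') :
    Disjoint ((φ ^ i) (φ.rokhlinBase b n)) ((φ ^ i') (φ.rokhlinBase b n)) := by
  have hlt : ∀ {i a k}, i < n → a < k / n → i + a * n < k := fun hi ha => by
    have := (Nat.le_div_iff_mul_le (by omega)).1 ha
    nlinarith
  simp only [pow_rokhlinBase, iSup_disjoint_iff, disjoint_iSup_iff]
  intro k' a' ha' k a ha
  refine φ.disjoint_pow_firstReturn (hlt hi ha) (hlt hi' ha') fun h => hii' ?_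
  have := congrArg (· % n) (Prod.ext_iff.1 h).2
  simpa [Nat.add_mul_mod_self_right, Nat.mod_eq_of_lt hi, Nat.mod_eq_of_lt hi'] using this

theorem compl_iSup_pow_rokhlinBase_le
    (htop : ⨆ k, ⨆ j < k, (φ ^ j) (φ.firstReturn b k) = ⊤) :
    (⨆ i < n, (φ ^ i) (φ.rokhlinBase b n))ᶜ ≤ φ.rokhlinResidual b n := by
  rw [← top_sdiff, sdiff_le_iff, ← htop]
  refine iSup₂_le fun k j => iSup_le fun hjk => ?_
  by_cases hj : j < n * (k / n)
  · have hn : 0 < n := Nat.pos_of_ne_zero (by rintro rfl; simp at hj)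
    refine le_sup_of_le_left (le_iSup₂_of_le (j % n) (Nat.mod_lt j hn) ?_)
    rw [pow_rokhlinBase]
    refine le_iSup₂_of_le k (j / n) (le_iSup_of_le ?_ ?_)
    · rw [Nat.div_lt_iff_lt_mul hn, mul_comm]; exact hj
    · rw [Nat.mod_add_div' j n]
  · refine le_sup_of_le_right (le_iSup₂_of_le k (j - n * (k / n)) (le_iSup_of_le ?_ ?_))
    · have := Nat.div_add_mod k n; omega
    · rw [Nat.add_sub_cancel' (not_lt.1 hj)]

end OrderIso

namespace IsCEPS

variable [ConditionallyCompleteLattice E] [AddCommGroup E] [Module ℝ E] {T S : E →ₗ[ℝ] E} {e : E}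

theorem T_iterate_S (hC : IsCEPS T S e) (k : ℕ) (x : E) : T (S^[k] x) = T x := by
  induction k generalizing x with
  | zero => rfl
  | succ k ih => rw [iterate_succ_apply, ih, hC.TS]

variable [IsOrderedAddMonoid E]

theorem T_mono (hC : IsCEPS T S e) : Monotone T := fun _ _ h =>
  sub_nonneg.1 (by simpa using hC.T_pos _ (sub_nonneg.2 h))

theorem T_isLUB (hC : IsCEPS T S e) {g : ℕ → E} (hg : Monotone g) {s : E}
    (h : IsLUB (range g) s) : IsLUB (range fun m => T (g m)) (T s) := by
  rw [isLUB_iff_isGLB_sub] at h ⊢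
  have hdir : DirectedOn (· ≥ ·) ((s - ·) '' range g) := by
    rintro _ ⟨_, ⟨a, rfl⟩, rfl⟩ _ ⟨_, ⟨b, rfl⟩, rfl⟩
    exact ⟨_, ⟨_, ⟨max a b, rfl⟩, rfl⟩, sub_le_sub_left (hg (le_max_left a b)) s,
      sub_le_sub_left (hg (le_max_right a b)) s⟩
  convert hC.T_ordCont _ ((range_nonempty g).image _) hdir h using 1
  simp only [← range_comp, comp_def, map_sub]

theorem S_injective (hC : IsCEPS T S e) : Injective S := by
  refine (injective_iff_map_eq_zero S).2 fun x hx => ?_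
  have hpos : ∀ y, S y = 0 → y ⊔ 0 = 0 := fun y hy =>
    hC.T_strictPos _ le_sup_right (by rw [← hC.TS, hC.S_hom, hy, map_zero, sup_idem, map_zero])
  exact le_antisymm (sup_eq_right.1 (hpos x hx))
    (neg_nonpos.1 (sup_eq_right.1 (hpos (-x) (by rw [map_neg, hx, neg_zero]))))

theorem S_le_S_iff (hC : IsCEPS T S e) {x y : E} : S x ≤ S y ↔ x ≤ y := by
  rw [← sup_eq_right, ← sup_eq_right, ← hC.S_hom, hC.S_injective.eq_iff]

noncomputable def orderAddIsoS (hC : IsCEPS T S e) (hS : Surjective S) : E ≃+o E :=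
  { Equiv.ofBijective S ⟨hC.S_injective, hS⟩ with
    map_add' := map_add S
    map_le_map_iff' := hC.S_le_S_iff }

noncomputable def componentAut (hC : IsCEPS T S e) (hS : Surjective S) :
    Component e ≃o Component e :=
  Component.congr e (hC.orderAddIsoS hS) hC.Se

variable (hC : IsCEPS T S e) (hS : Surjective S)
include hC

theorem coe_componentAut_pow_apply (k : ℕ) (p : Component e) :
    ((hC.componentAut hS ^ k) p : E) = S^[k] p :=
  Component.coe_congr_pow_apply _ _ k p

theorem coe_componentAut_inv_pow_apply (k : ℕ) (p : Component e) :
    (((hC.componentAut hS)⁻¹ ^ k) p : E) = (surjInv hS)^[k] p :=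
  Component.coe_congr_inv_pow_apply _ _ k p

theorem T_coe_componentAut_pow_apply (k : ℕ) (p : Component e) :
    T ((hC.componentAut hS ^ k) p) = T p := by
  rw [coe_componentAut_pow_apply, hC.T_iterate_S]

variable [Fact (0 ≤ e)]

theorem coe_componentAut_firstReturn (p : Component e) (k : ℕ) :
    ((hC.componentAut hS).firstReturn p k : E) = qComp (surjInv hS) e p k := by
  simp only [OrderIso.firstReturn, qComp, Component.coe_inf, Component.coe_compl,
    Component.coe_iSup_lt, coe_componentAut_inv_pow_apply]

theorem isAperiodic_componentAut (hAp : IsAperiodic (surjInv hS) e e) :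
    (hC.componentAut hS).IsAperiodic := by
  intro N c hc
  obtain ⟨k, hk, u, hu, hqu⟩ := hAp N c c.2 fun h => hc (Subtype.ext h)
  refine ⟨k, hk, ⟨u, c.2.trans hu⟩, hu.2.1, fun h => hqu ?_⟩
  rw [← coe_componentAut_firstReturn hC hS ⟨u, c.2.trans hu⟩, h, Component.coe_bot]

/- A wandering component has pairwise disjoint images, so `m • T z ≤ T e = e` for all `m`. -/
theorem isConservative_componentAut : (hC.componentAut hS).IsConservative := by
  intro z hz
  have hdisj := OrderIso.pairwise_disjoint_pow_apply _ hz
  have hTz : T z = 0 := eq_zero_of_forall_nsmul_le (hC.T_pos _ z.2.1) fun m => by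
    calc m • T z = T (⨆ i < m, (hC.componentAut hS ^ i) z : Component e) := by
          rw [Component.coe_iSup_lt_eq_sum (hdisj.set_pairwise _), map_sum]
          simp [T_coe_componentAut_pow_apply]
      _ ≤ T e := hC.T_mono (Subtype.prop _ : IsComponent e _).2.1
      _ = e := hC.Te
  exact Subtype.ext (hC.T_strictPos _ z.2.1 hTz)

theorem T_coe_iSup_towers_eq_sum (b : Component e) {c r : ℕ → ℕ} (hcr : ∀ k, c k + r k ≤ k)
    (m : ℕ) :
    T (⨆ k < m, ⨆ j < r k, (hC.componentAut hS ^ (c k + j))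
        ((hC.componentAut hS).firstReturn b k) : Component e) =
      ∑ k ∈ Finset.range m, r k • T ((hC.componentAut hS).firstReturn b k) := by
  set φ := hC.componentAut hS
  have hlt : ∀ {k j}, j < r k → c k + j < k := fun {k j} hj => by have := hcr k; omega
  rw [Component.coe_iSup_lt_eq_sum, map_sum]
  · refine Finset.sum_congr rfl fun k _ => ?_
    rw [Component.coe_iSup_lt_eq_sum, map_sum]
    · simp [φ, T_coe_componentAut_pow_apply]
    · intro j hj j' hj' hjj'
      exact φ.disjoint_pow_firstReturn (hlt hj) (hlt hj') (by simpa using hjj')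
  · intro k _ k' _ hkk'
    simp only [onFun, iSup₂_disjoint_iff, disjoint_iSup₂_iff]
    intro j' hj' j hj
    exact φ.disjoint_pow_firstReturn (hlt hj) (hlt hj') (by simp [hkk'])

/- The residual keeps `k % n ≤ (n / K) k` levels of a tower of height `k`, and towers of heights
`0 < k < K` are empty; the full towers have total mass at most `T e = e`. -/
theorem T_coe_rokhlinResidual_le [PosSMulMono ℝ E] {b : Component e} {K n : ℕ} (hK : 0 < K)
    (hn : 0 < n) (hb : ∀ k, 0 < k → k < K → (hC.componentAut hS).firstReturn b k = ⊥) :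
    T ((hC.componentAut hS).rokhlinResidual b n : Component e) ≤ ((n : ℝ) / K) • e := by
  set φ := hC.componentAut hS
  have hpart : ∀ m, T (⨆ k < m, ⨆ j < k % n, (φ ^ (n * (k / n) + j)) (φ.firstReturn b k) :
      Component e) ≤ ((n : ℝ) / K) • e := fun m => by
    rw [T_coe_iSup_towers_eq_sum hC hS b (fun k => (Nat.div_add_mod k n).le) m]
    calc _ ≤ ((n : ℝ) / K) • ∑ k ∈ Finset.range m, k • T (φ.firstReturn b k : E) :=
          sum_mod_smul_le_div_smul_sum hK hn
            (fun k => hC.T_pos _ (Subtype.prop _ : IsComponent e _).1)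
            (fun k hk hkK => by simp [hb k hk hkK]) m
      _ = ((n : ℝ) / K) • T (⨆ k < m, ⨆ j < k, (φ ^ (0 + j)) (φ.firstReturn b k) :
          Component e) := by
          rw [T_coe_iSup_towers_eq_sum hC hS b (c := fun _ => 0) (r := fun k => k) (by simp)]
      _ ≤ ((n : ℝ) / K) • e := smul_le_smul_of_nonneg_left
          ((hC.T_mono (Subtype.prop _ : IsComponent e _).2.1).trans_eq hC.Te) (by positivity)
  have hmono : Monotone fun m => ((⨆ k < m, ⨆ j < k % n,
      (φ ^ (n * (k / n) + j)) (φ.firstReturn b k) : Component e) : E) :=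
    fun _ _ h => Subtype.coe_le_coe.2 (biSup_mono fun _ hk => hk.trans_le h)
  have hlub := hC.T_isLUB hmono (Component.isLUB_coe_iSup _)
  rw [OrderIso.rokhlinResidual, ← biSup_lt_eq_iSup]
  exact hlub.2 (forall_mem_range.2 hpart)

end IsCEPS

theorem kakutani_rokhlin_eps_general {E : Type*} [ConditionallyCompleteLattice E] [AddCommGroup E]
    [Module ℝ E] [CovariantClass E E (· + ·) (· ≤ ·)] [PosSMulMono ℝ E]
    (T S : E →ₗ[ℝ] E) (e : E) (hCEPS : IsCEPS T S e)
    (hS : Function.Surjective ⇑S)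
    (hAp : IsAperiodic (Function.surjInv hS) e e)
    (n : ℕ) (hn : 1 ≤ n) (ε : ℝ) (hε : 0 < ε) :
    ∃ q : E, IsComponent e q ∧
      (∀ i j : ℕ, i < n → j < n → i ≠ j → (⇑S)^[i] q ⊓ (⇑S)^[j] q = 0) ∧
      T (e - partialSup (fun i => (⇑S)^[i] q) n) ≤ ε • e := by
  have : IsOrderedAddMonoid E :=
    ⟨fun _ _ h _ => add_le_add h le_rfl, fun _ _ h _ => add_le_add le_rfl h⟩
  have he : 0 ≤ e := hCEPS.unit.1.le
  have : Fact (0 ≤ e) := ⟨he⟩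
  set φ := hCEPS.componentAut hS
  set K := ⌈(n : ℝ) / ε⌉₊
  have hK : 0 < K := Nat.ceil_pos.2 (by positivity)
  have hKε : (n : ℝ) / K ≤ ε := by
    rw [div_le_iff₀ (by positivity), mul_comm, ← div_le_iff₀ hε]
    exact Nat.le_ceil _
  obtain ⟨B, hBsep, hBmeet⟩ := (hCEPS.isAperiodic_componentAut hS hAp).exists_marker K
  have htop := (hCEPS.isConservative_componentAut hS).iSup_pow_firstReturn_eq_top hBmeet
  refine ⟨φ.rokhlinBase B n, (φ.rokhlinBase B n).2, fun i j hi hj hij => ?_, ?_⟩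
  · have := Component.disjoint_iff_coe_inf.1 (φ.disjoint_pow_rokhlinBase B n hi hj hij)
    simpa only [φ, IsCEPS.coe_componentAut_pow_apply] using this
  · calc T (e - partialSup (fun i => (⇑S)^[i] (φ.rokhlinBase B n : E)) n)
        = T ((⨆ i < n, (φ ^ i) (φ.rokhlinBase B n))ᶜ : Component e) := by
          simp only [Component.coe_compl, Component.coe_iSup_lt, φ,
            IsCEPS.coe_componentAut_pow_apply]
      _ ≤ T (φ.rokhlinResidual B n : Component e) :=
          hCEPS.T_mono (φ.compl_iSup_pow_rokhlinBase_le B n htop)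
      _ ≤ ((n : ℝ) / K) • e := hCEPS.T_coe_rokhlinResidual_le hS hK hn
          fun k hk hkK => φ.firstReturn_eq_bot (hBsep k hk hkK)
      _ ≤ ε • e := smul_le_smul_of_nonneg_right hKε he

/-- **Riesz space Kakutani–Rokhlin theorem (ε-bounded version).** -/
theorem kakutani_rokhlin_eps {E : Type*} [ConditionallyCompleteLattice E] [AddCommGroup E]
    [Module ℝ E] [CovariantClass E E (· + ·) (· ≤ ·)] [PosSMulMono ℝ E]
    (T S : E →ₗ[ℝ] E) (e : E) (hCEPS : IsCEPS T S e)
    (hErg : {f : E | S f = f} = Set.range T)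
    (hTuc : TUnivComplete T)
    (hS : Function.Surjective ⇑S)
    (hAp : IsAperiodic (Function.surjInv hS) e e)
    (n : ℕ) (hn : 1 ≤ n) (ε : ℝ) (hε : 0 < ε) :
    ∃ q : E, IsComponent e q ∧
      (∀ i j : ℕ, i < n → j < n → i ≠ j → (⇑S)^[i] q ⊓ (⇑S)^[j] q = 0) ∧
      T (e - partialSup (fun i => (⇑S)^[i] q) n) ≤ ε • e :=
  kakutani_rokhlin_eps_general T S e hCEPS hS hAp n hn ε hε
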